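/- For every matrix (a b; c d) in SL₂(ℤ) with c ≡ 0 (mod 4) and every τ in the upper half-plane: θ₃((aτ+b)/(cτ+d))² = χ₋₄(d)·(cτ+d)·θ₃(τ)². -/

import Mathlib

/-!
Mathlib's `jacobiTheta τ = ∑ exp(π i n² τ)` is `θ₃(τ / 2)`, and conjugating by `τ ↦ 2τ` turns
`(a b; c d)` with `4 ∣ c` into `(a 2b; c/2 d)`. So it suffices that `jacobiTheta²` transforms with
weight one and multiplier `χ₋₄(D)` under every `(A B; C D) ∈ SL₂(ℤ)` with `B`, `C` even.
This holds for `τ ↦ τ + 2` by periodicity, for `τ ↦ τ / (2τ + 1)` by the inversion formula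
`jacobiTheta(-1/τ)² = -iτ · jacobiTheta(τ)²`, and for `-1`; it is stable under products, since
`Cτ + D` is a cocycle and, in that group, the lower right entry of a product is the product of
the lower right entries modulo 4.
These matrices generate the group: a Euclidean algorithm on the lower row shrinks `|C|` to `0`.
-/

open Complex

noncomputable section

/-- The Jacobi theta-null θ₃. -/
def theta3 (τ : ℂ) : ℂ :=
  ∑' m : ℤ, Complex.exp (2 * Real.pi * Complex.I * τ * (m : ℂ) ^ 2)

/-- The quadratic character χ₋₄. -/
def chiNeg4 (d : ℤ) : ℂ := if d % 4 = 1 then 1 else if d % 4 = 3 then -1 else 0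

lemma chiNeg4_mul (x y : ℤ) : chiNeg4 (x * y) = chiNeg4 x * chiNeg4 y := by
  have hxy : x * y % 4 = x % 4 * (y % 4) % 4 := Int.mul_emod x y 4
  have hx : x % 4 = 0 ∨ x % 4 = 1 ∨ x % 4 = 2 ∨ x % 4 = 3 := by omega
  have hy : y % 4 = 0 ∨ y % 4 = 1 ∨ y % 4 = 2 ∨ y % 4 = 3 := by omega
  rcases hx with hx | hx | hx | hx <;> rcases hy with hy | hy | hy | hy <;>
    simp [chiNeg4, hxy, hx, hy]

lemma chiNeg4_neg (x : ℤ) : chiNeg4 (-x) = -chiNeg4 x := by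
  unfold chiNeg4
  split_ifs <;> first | omega | norm_num

lemma chiNeg4_add_of_four_dvd {x : ℤ} (y : ℤ) (hx : 4 ∣ x) : chiNeg4 (x + y) = chiNeg4 y := by
  simp only [chiNeg4, show (x + y) % 4 = y % 4 by omega]

lemma im_ofReal_moebius (A B C D : ℝ) (σ : ℂ) :
    ((A * σ + B) / (C * σ + D)).im = (A * D - B * C) * σ.im / normSq (C * σ + D) := by
  simp only [div_im, add_re, add_im, mul_re, mul_im, ofReal_re, ofReal_im]
  ring

lemma ofReal_mul_add_ne_zero {C D : ℝ} (hCD : C ≠ 0 ∨ D ≠ 0) {σ : ℂ} (hσ : 0 < σ.im) :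
    (C * σ + D : ℂ) ≠ 0 := by
  intro h
  have him : C * σ.im = 0 := by simpa using congrArg im h
  have hC : C = 0 := by simpa [hσ.ne'] using him
  have hD : D = 0 := by simpa [hC] using congrArg re h
  exact hCD.elim (· hC) (· hD)

lemma jacobiTheta_periodic : Function.Periodic jacobiTheta 2 := fun σ => by
  rw [add_comm, jacobiTheta_two_add]

lemma jacobiTheta_add_of_even {B : ℤ} (hB : Even B) (σ : ℂ) :
    jacobiTheta (σ + B) = jacobiTheta σ := by
  obtain ⟨n, rfl⟩ := hB
  simpa [← two_mul, mul_comm] using jacobiTheta_periodic.int_mul n σ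

lemma jacobiTheta_sq_neg_inv {σ : ℂ} (hσ : σ ≠ 0) :
    jacobiTheta (-1 / σ) ^ 2 = -I * σ * jacobiTheta σ ^ 2 := by
  have hs : (-I * σ) ^ (1 / 2 : ℂ) ≠ 0 := by
    rw [Ne, cpow_eq_zero_iff, not_and_or]
    exact Or.inl (mul_ne_zero (neg_ne_zero.mpr I_ne_zero) hσ)
  have hfe := jacobiTheta₂_functional_equation 0 σ
  simp only [zero_pow two_ne_zero, mul_zero, zero_div, Complex.exp_zero, mul_one,
    ← jacobiTheta_eq_jacobiTheta₂] at hfe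
  have hS : jacobiTheta (-1 / σ) = (-I * σ) ^ (1 / 2 : ℂ) * jacobiTheta σ := by
    rw [hfe, ← mul_assoc, mul_one_div_cancel hs, one_mul]
  have hsq : ((-I * σ) ^ (1 / 2 : ℂ)) ^ 2 = -I * σ := by
    rw [sq, ← cpow_add _ _ (mul_ne_zero (neg_ne_zero.mpr I_ne_zero) hσ)]
    norm_num
  rw [hS, mul_pow, hsq]

def ThetaSqTransforms (A B C D : ℤ) : Prop :=
  ∀ σ : ℂ, 0 < σ.im →
    jacobiTheta ((A * σ + B) / (C * σ + D)) ^ 2 = chiNeg4 D * (C * σ + D) * jacobiTheta σ ^ 2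

lemma thetaSqTransforms_upper_unitriangular {B : ℤ} (hB : Even B) :
    ThetaSqTransforms 1 B 0 1 := fun σ _ => by
  simp [chiNeg4, jacobiTheta_add_of_even hB]

lemma thetaSqTransforms_lower_unitriangular {C : ℤ} (hC : Even C) : ThetaSqTransforms 1 0 C 1 := by
  intro σ hσ
  have hσ0 : σ ≠ 0 := fun h => by simp [h] at hσ
  set u := -1 / σ - C with hu_def
  have hu : 0 < u.im := by
    rw [hu_def, sub_im, intCast_im, sub_zero, neg_div, one_div, ← inv_neg]
    exact UpperHalfPlane.im_inv_neg_coe_pos ⟨σ, hσ⟩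
  have hu0 : u ≠ 0 := fun h => by simp [h] at hu
  have harg : -1 / u = σ / (C * σ + 1) := by
    rw [hu_def, div_sub' hσ0, div_div_eq_mul_div, ← neg_div_neg_eq]
    ring_nf
  have hθu : jacobiTheta u = jacobiTheta (-1 / σ) := by
    rw [hu_def, sub_eq_add_neg, ← Int.cast_neg]
    exact jacobiTheta_add_of_even hC.neg _
  simp only [Int.cast_one, Int.cast_zero, one_mul, add_zero, show chiNeg4 1 = 1 by simp [chiNeg4]]
  rw [← harg, jacobiTheta_sq_neg_inv hu0, hθu, jacobiTheta_sq_neg_inv hσ0, hu_def]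
  field_simp
  linear_combination -(C * σ + 1) * jacobiTheta σ ^ 2 * I_sq

lemma ThetaSqTransforms.neg {A B C D : ℤ} (h : ThetaSqTransforms A B C D) :
    ThetaSqTransforms (-A) (-B) (-C) (-D) := fun σ hσ => by
  have hfrac : ((-A : ℤ) * σ + (-B : ℤ)) / ((-C : ℤ) * σ + (-D : ℤ)) =
      (A * σ + B) / (C * σ + D) := by
    push_cast
    rw [← neg_div_neg_eq]
    ring_nf
  rw [hfrac, h σ hσ, chiNeg4_neg]
  push_cast
  ring

lemma ThetaSqTransforms.mul {A B C D a b c d : ℤ} (hg : ThetaSqTransforms A B C D)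
    (hh : ThetaSqTransforms a b c d) (hdet : a * d - b * c = 1) (hCb : 4 ∣ C * b) :
    ThetaSqTransforms (A * a + B * c) (A * b + B * d) (C * a + D * c) (C * b + D * d) := by
  intro σ hσ
  have hcd : (c : ℝ) ≠ 0 ∨ (d : ℝ) ≠ 0 := by
    by_contra! h
    simp only [Int.cast_eq_zero] at h
    simp [h.1, h.2] at hdet
  have hden : (c * σ + d : ℂ) ≠ 0 := by exact_mod_cast ofReal_mul_add_ne_zero hcd hσ
  set w := (a * σ + b) / (c * σ + d : ℂ) with hw_def
  have hw : 0 < w.im := by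
    have him := im_ofReal_moebius a b c d σ
    have hdetR : (a * d - b * c : ℝ) = 1 := by exact_mod_cast hdet
    push_cast at him
    rw [him, hdetR, one_mul]
    exact div_pos hσ (normSq_pos.mpr hden)
  have hwden : w * (c * σ + d) = a * σ + b := div_mul_cancel₀ _ hden
  have hfrac : ((A * a + B * c : ℤ) * σ + (A * b + B * d : ℤ)) /
      ((C * a + D * c : ℤ) * σ + (C * b + D * d : ℤ)) = (A * w + B) / (C * w + D) := by
    rw [← mul_div_mul_right (A * w + B) (C * w + D) hden]
    push_cast
    congr 1
    · linear_combination (-(A : ℂ)) * hwden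
    · linear_combination (-(C : ℂ)) * hwden
  rw [hfrac, hg w hw, hh σ hσ, chiNeg4_add_of_four_dvd _ hCb, chiNeg4_mul]
  push_cast
  linear_combination chiNeg4 D * chiNeg4 d * jacobiTheta σ ^ 2 * C * hwden

lemma exists_natAbs_add_two_mul_lt (x y : ℤ) (hy : y ≠ 0) (hxy : Odd (x + y)) :
    ∃ n : ℤ, (x + 2 * n * y).natAbs < y.natAbs := by
  have hr_lt : x.bmod (2 * y.natAbs) < (2 * y.natAbs + 1 : ℕ) / 2 := Int.bmod_lt (by omega)
  have hr_ge : -((2 * y.natAbs : ℕ) / 2 : ℤ) ≤ x.bmod (2 * y.natAbs) := Int.le_bmod (by omega)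
  obtain ⟨k, hk⟩ : ((2 * y.natAbs : ℕ) : ℤ) ∣ x - x.bmod (2 * y.natAbs) :=
    Int.ModEq.dvd Int.bmod_emod
  generalize x.bmod (2 * y.natAbs) = r at hr_lt hr_ge hk
  rw [Nat.cast_mul, Nat.cast_ofNat, mul_assoc] at hk
  -- `r ≠ -|y|` by parity, so `|r| < |y|`
  have hr : r.natAbs < y.natAbs := by obtain ⟨t, ht⟩ := hxy; omega
  rcases Int.natAbs_eq y with hy' | hy'
  · exact ⟨-k, by rwa [show x + 2 * -k * y = r by rw [hy']; linear_combination hk]⟩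
  · exact ⟨k, by rwa [show x + 2 * k * y = r by rw [hy']; linear_combination hk]⟩

theorem thetaSqTransforms_of_even {A B C D : ℤ} (hdet : A * D - B * C = 1) (hB : Even B)
    (hC : Even C) : ThetaSqTransforms A B C D := by
  induction hk : C.natAbs using Nat.strong_induction_on generalizing A B C D with
  | _ k ih =>
  rcases eq_or_ne C 0 with rfl | hC0
  · rcases Int.eq_one_or_neg_one_of_mul_eq_one' (by simpa using hdet) with ⟨rfl, rfl⟩ | ⟨rfl, rfl⟩
    · exact thetaSqTransforms_upper_unitriangular hB
    · simpa using (thetaSqTransforms_upper_unitriangular hB.neg).neg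
  have hD : Odd D := by
    have hAD : Odd (A * D) := by
      rw [show A * D = B * C + 1 by linarith]
      exact (hC.mul_left B).add_one
    exact (Int.odd_mul.mp hAD).2
  -- `(A B; C D) * T ^ (2 * n) * V ^ m`, with `V = (1 0; 2 1)`, has a smaller lower left entry.
  obtain ⟨n, hn⟩ := exists_natAbs_add_two_mul_lt D C hC0 (hD.add_even hC)
  have hD₁ : Odd (D + 2 * n * C) := hD.add_even ((even_two_mul n).mul_right C)
  have hD₁0 : D + 2 * n * C ≠ 0 := by obtain ⟨t, ht⟩ := hD₁; omega
  obtain ⟨m, hm⟩ := exists_natAbs_add_two_mul_lt C _ hD₁0 (hC.add_odd hD₁)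
  have hreduced := ih _ (hm.trans (hn.trans_eq hk)) (A := A + 2 * m * (B + 2 * n * A))
    (B := B + 2 * n * A) (D := D + 2 * n * C) (by linear_combination hdet)
    (hB.add ((even_two_mul n).mul_right A)) (hC.add ((even_two_mul m).mul_right _)) rfl
  obtain ⟨c, hc⟩ := hC
  have := (hreduced.mul (thetaSqTransforms_lower_unitriangular (C := -2 * m) ⟨-m, by ring⟩)
    (by ring) (by simp)).mul
    (thetaSqTransforms_upper_unitriangular (B := -2 * n) ⟨-n, by ring⟩) (by ring)
    ⟨-(c * n), by rw [hc]; ring⟩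
  convert this using 2 <;> ring

lemma theta3_eq_jacobiTheta_two_mul (τ : ℂ) : theta3 τ = jacobiTheta (2 * τ) :=
  tsum_congr fun m => by ring_nf

theorem theta3_sq_modularity_on_Gamma0_4
    (a b c d : ℤ) (hdet : a * d - b * c = 1) (hc : (4 : ℤ) ∣ c)
    (τ : ℂ) (hτ : 0 < τ.im) :
    theta3 (((a : ℂ) * τ + b) / ((c : ℂ) * τ + d)) ^ 2 =
      chiNeg4 d * ((c : ℂ) * τ + d) * theta3 τ ^ 2 := by
  obtain ⟨k, rfl⟩ := hc
  have h := thetaSqTransforms_of_even (A := a) (B := 2 * b) (C := 2 * k) (D := d)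
    (by linear_combination hdet) (even_two_mul b) (even_two_mul k) (2 * τ) (by simpa using hτ)
  rw [theta3_eq_jacobiTheta_two_mul, theta3_eq_jacobiTheta_two_mul]
  convert h using 3 <;> push_cast <;> ring
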